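/- Let A be a category with pullbacks, (B, F) a pair satisfying axioms (E1)–(E5), and U : A → B a functor preserving pullbacks. Then the class E = U⁻¹(F) of morphisms of A whose image under U lies in F also satisfies (E1)–(E5) on A (where the pullbacks required in (E2) exist in A by assumption). -/

import Mathlib

/-!
Since `U` preserves composition, (E1), (E3) and (E4) pass to `U⁻¹(F)` directly. For (E2) and
(E5), the pullbacks taken in `A` are sent by `U` to pullbacks in `B`, which differ from the ones
supplied by the axioms in `B` only by an isomorphism; (E1) and (E3) make `F` closed under
composition with isomorphisms, so membership in `F` does not depend on the chosen pullback.
-/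

open CategoryTheory CategoryTheory.Limits

/-- Double extension: a commutative square (top `f₁`, left `a`, right `b`, bottom
`f₀`) all of whose sides are in `F`, such that the pullback of the bottom and right
sides exists and the comparison morphism to it is in `F`. -/
def IsDblExt {D : Type*} [Category D] (F : MorphismProperty D)
    {A₁ A₀ B₁ B₀ : D} (f₁ : A₁ ⟶ B₁) (a : A₁ ⟶ A₀) (b : B₁ ⟶ B₀) (f₀ : A₀ ⟶ B₀) : Prop :=
  F f₁ ∧ F a ∧ F b ∧ F f₀ ∧
  ∃ (P : D) (pA : P ⟶ A₀) (pB : P ⟶ B₁) (c : A₁ ⟶ P),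
    IsPullback pA pB f₀ b ∧ c ≫ pA = a ∧ c ≫ pB = f₁ ∧ F c

/-- (E1): the class contains all isomorphisms. -/
def AxE1 {D : Type*} [Category D] (F : MorphismProperty D) : Prop :=
  ∀ {X Y : D} (f : X ⟶ Y), IsIso f → F f

/-- (E2): pullbacks of morphisms of the class exist and are in the class. -/
def AxE2 {D : Type*} [Category D] (F : MorphismProperty D) : Prop :=
  ∀ {X Y Z : D} (g : Y ⟶ Z) (h : X ⟶ Z), F g →
    ∃ (P : D) (p₁ : P ⟶ X) (p₂ : P ⟶ Y), IsPullback p₁ p₂ h g ∧ F p₁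

/-- (E3): closure under composition. -/
def AxE3 {D : Type*} [Category D] (F : MorphismProperty D) : Prop :=
  ∀ {X Y Z : D} (f : X ⟶ Y) (g : Y ⟶ Z), F f → F g → F (f ≫ g)

/-- (E4): right cancellation. -/
def AxE4 {D : Type*} [Category D] (F : MorphismProperty D) : Prop :=
  ∀ {X Y Z : D} (f : X ⟶ Y) (g : Y ⟶ Z), F (f ≫ g) → F g

/-- (E5): every split epimorphism between morphisms of the class (a square whose
horizontal arrows are compatibly split epimorphisms and whose vertical arrows are
in the class) is a double extension. -/
def AxE5 {D : Type*} [Category D] (F : MorphismProperty D) : Prop :=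
  ∀ {A₁ A₀ B₁ B₀ : D} (a : A₁ ⟶ A₀) (b : B₁ ⟶ B₀)
    (f₁ : A₁ ⟶ B₁) (f₀ : A₀ ⟶ B₀) (s₁ : B₁ ⟶ A₁) (s₀ : B₀ ⟶ A₀),
    F a → F b → f₁ ≫ b = a ≫ f₀ → s₁ ≫ a = b ≫ s₀ →
    s₁ ≫ f₁ = 𝟙 B₁ → s₀ ≫ f₀ = 𝟙 B₀ → IsDblExt F f₁ a b f₀

namespace CategoryTheory

def Functor.MapsIsPullback {C D : Type*} [Category C] [Category D] (U : C ⥤ D) : Prop :=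
  ∀ {P X Y Z : C} (fst : P ⟶ X) (snd : P ⟶ Y) (f : X ⟶ Z) (g : Y ⟶ Z),
    IsPullback fst snd f g → IsPullback (U.map fst) (U.map snd) (U.map f) (U.map g)

namespace MorphismProperty

variable {C D : Type*} [Category C] [Category D] {P : MorphismProperty D}

lemma respectsIso_of_axE1_of_axE3 (h1 : AxE1 P) (h3 : AxE3 P) : P.RespectsIso :=
  RespectsIso.mk P (fun e _ hf => h3 _ _ (h1 e.hom inferInstance) hf)
    (fun e _ hf => h3 _ _ hf (h1 e.hom inferInstance))

lemma fst_mem_of_isPullback [P.RespectsIso] {W W' X Y Z : D}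
    {fst : W ⟶ X} {snd : W ⟶ Y} {fst' : W' ⟶ X} {snd' : W' ⟶ Y} {f : X ⟶ Z} {g : Y ⟶ Z}
    (h : IsPullback fst snd f g) (h' : IsPullback fst' snd' f g) (hfst' : P fst') : P fst := by
  rw [← h.isoIsPullback_hom_fst _ _ h']
  exact RespectsIso.precomp P _ _ hfst'

lemma comparison_mem_of_isPullback [P.RespectsIso] {V W W' X Y Z : D}
    {fst : W ⟶ X} {snd : W ⟶ Y} {fst' : W' ⟶ X} {snd' : W' ⟶ Y} {f : X ⟶ Z} {g : Y ⟶ Z}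
    (h : IsPullback fst snd f g) (h' : IsPullback fst' snd' f g) {l : V ⟶ W} {l' : V ⟶ W'}
    (h_fst : l ≫ fst = l' ≫ fst') (h_snd : l ≫ snd = l' ≫ snd') (hl' : P l') : P l := by
  have hl : l = l' ≫ (h'.isoIsPullback _ _ h).hom :=
    h.hom_ext (by simp [h_fst]) (by simp [h_snd])
  rw [hl]
  exact RespectsIso.postcomp P _ _ hl'

lemma axE1_inverseImage (h1 : AxE1 P) (U : C ⥤ D) : AxE1 (P.inverseImage U) :=
  fun f _ => h1 (U.map f) inferInstance

lemma axE2_inverseImage [HasPullbacks C] [P.RespectsIso] {U : C ⥤ D} (hU : U.MapsIsPullback)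
    (h2 : AxE2 P) : AxE2 (P.inverseImage U) := by
  intro X Y Z g h hg
  obtain ⟨Q, q₁, q₂, hQ, hq₁⟩ := h2 (U.map g) (U.map h) hg
  have hP := IsPullback.of_hasPullback h g
  exact ⟨_, _, _, hP, show P (U.map _) from fst_mem_of_isPullback (hU _ _ _ _ hP) hQ hq₁⟩

lemma axE3_inverseImage (h3 : AxE3 P) (U : C ⥤ D) : AxE3 (P.inverseImage U) := by
  intro X Y Z f g hf hg
  change P (U.map (f ≫ g))
  rw [U.map_comp]
  exact h3 _ _ hf hg

lemma axE4_inverseImage (h4 : AxE4 P) (U : C ⥤ D) : AxE4 (P.inverseImage U) := by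
  intro X Y Z f g hfg
  change P (U.map (f ≫ g)) at hfg
  rw [U.map_comp] at hfg
  exact h4 _ _ hfg

lemma axE5_inverseImage [HasPullbacks C] [P.RespectsIso] {U : C ⥤ D} (hU : U.MapsIsPullback)
    (h5 : AxE5 P) : AxE5 (P.inverseImage U) := by
  intro A₁ A₀ B₁ B₀ a b f₁ f₀ s₁ s₀ ha hb hf hs hs₁ hs₀
  obtain ⟨hf₁, ha', hb', hf₀, Q, qA, qB, c, hQ, hc_fst, hc_snd, hc⟩ :=
    h5 (U.map a) (U.map b) (U.map f₁) (U.map f₀) (U.map s₁) (U.map s₀) ha hb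
      (by simp only [← U.map_comp, hf]) (by simp only [← U.map_comp, hs])
      (by rw [← U.map_comp, hs₁, U.map_id]) (by rw [← U.map_comp, hs₀, U.map_id])
  have hP := IsPullback.of_hasPullback f₀ b
  refine ⟨hf₁, ha', hb', hf₀, _, _, _, hP.lift a f₁ hf.symm, hP, hP.lift_fst _ _ _,
    hP.lift_snd _ _ _, ?_⟩
  show P (U.map _)
  exact comparison_mem_of_isPullback (hU _ _ _ _ hP) hQ
    (by rw [← U.map_comp, hP.lift_fst, hc_fst]) (by rw [← U.map_comp, hP.lift_snd, hc_snd]) hc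

end MorphismProperty

end CategoryTheory

/-- if `A` has pullbacks, `(B, F)` satisfies (E1)–(E5), and
`U : A ⥤ B` preserves pullbacks, then the preimage class `E = U⁻¹(F)` satisfies
(E1)–(E5) on `A`. -/
theorem stmt11 {A : Type*} [Category A] {B : Type*} [Category B]
    [HasPullbacks A] (U : A ⥤ B)
    (hU : ∀ {P X Y Z : A} (fst : P ⟶ X) (snd : P ⟶ Y) (f : X ⟶ Z) (g : Y ⟶ Z),
      IsPullback fst snd f g → IsPullback (U.map fst) (U.map snd) (U.map f) (U.map g))
    (F : MorphismProperty B)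
    (h1 : AxE1 F) (h2 : AxE2 F) (h3 : AxE3 F) (h4 : AxE4 F) (h5 : AxE5 F) :
    AxE1 (fun _ _ f => F (U.map f) : MorphismProperty A) ∧
    AxE2 (fun _ _ f => F (U.map f) : MorphismProperty A) ∧
    AxE3 (fun _ _ f => F (U.map f) : MorphismProperty A) ∧
    AxE4 (fun _ _ f => F (U.map f) : MorphismProperty A) ∧
    AxE5 (fun _ _ f => F (U.map f) : MorphismProperty A) := by
  have : F.RespectsIso := MorphismProperty.respectsIso_of_axE1_of_axE3 h1 h3
  exact ⟨F.axE1_inverseImage h1 U, F.axE2_inverseImage @hU h2, F.axE3_inverseImage h3 U,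
    F.axE4_inverseImage h4 U, F.axE5_inverseImage @hU h5⟩
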